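/- Let d ≥ 1, let p > 1 + 2/d, and let K(t,x) = (4πt)^{-d/2} exp(−‖x‖²/(4t)) be the Gaussian heat kernel on ℝ^d. Then for every k > 0 there exists δ > 0 such that for every continuous u₀ : ℝ^d → [0,∞) with u₀(x) ≤ δ·exp(−k‖x‖²) for all x, there exists a measurable function u : (0,∞) × ℝ^d → [0,∞), finite everywhere, satisfying for all t > 0 and x ∈ ℝ^d the mild equation u(t,x) = ∫_{ℝ^d} K(t,x−y) u₀(y) dy + ∫₀ᵗ ∫_{ℝ^d} K(t−s,x−y) u(s,y)^p dy ds. -/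

import Mathlib

open MeasureTheory ENNReal

/-- The Gaussian heat kernel on `ℝ^d`. -/
noncomputable def heatKernel (d : ℕ) (t : ℝ) (x : EuclideanSpace ℝ (Fin d)) : ℝ :=
  (4 * Real.pi * t) ^ (-(d : ℝ) / 2) * Real.exp (-‖x‖ ^ 2 / (4 * t))

section FujitaAux

open Real

noncomputable def gbar (d : ℕ) (k s : ℝ) (x : EuclideanSpace ℝ (Fin d)) : ℝ :=
  (1 + 4 * k * s) ^ (-(d : ℝ) / 2) * Real.exp (-(k / (1 + 4 * k * s)) * ‖x‖ ^ 2)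

lemma heatKernel_nonneg {d : ℕ} {t : ℝ} (ht : 0 < t) (x : EuclideanSpace ℝ (Fin d)) :
    0 ≤ heatKernel d t x := by
  unfold heatKernel
  have : (0:ℝ) < 4 * Real.pi * t := by positivity
  positivity

lemma measurable_heatKernel (d : ℕ) :
    Measurable fun q : ℝ × EuclideanSpace ℝ (Fin d) => heatKernel d q.1 q.2 := by
  unfold heatKernel
  exact ((measurable_const.mul measurable_fst).pow measurable_const).mul
    (((measurable_snd.norm.pow measurable_const).neg.div
      (measurable_const.mul measurable_fst)).exp)

lemma gauss_complete_sq {d : ℕ} (a b : ℝ) (hab : a + b ≠ 0) (x y : EuclideanSpace ℝ (Fin d)) :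
    b * ‖x - y‖ ^ 2 + a * ‖y‖ ^ 2
      = (a + b) * ‖y - (b / (a + b)) • x‖ ^ 2 + (a * b / (a + b)) * ‖x‖ ^ 2 := by
  rw [norm_sub_sq_real, norm_sub_sq_real, real_inner_smul_right, norm_smul,
    Real.norm_eq_abs, mul_pow, sq_abs, real_inner_comm y x]
  field_simp
  ring

lemma integral_gauss_shift {d : ℕ} {a : ℝ} (ha : 0 < a) (z : EuclideanSpace ℝ (Fin d)) :
    ∫ y : EuclideanSpace ℝ (Fin d), Real.exp (-a * ‖y - z‖ ^ 2)
      = (Real.pi / a) ^ ((d : ℝ) / 2) := by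
  rw [integral_sub_right_eq_self (fun y : EuclideanSpace ℝ (Fin d) => Real.exp (-a * ‖y‖ ^ 2)) z,
    GaussianFourier.integral_rexp_neg_mul_sq_norm ha, finrank_euclideanSpace_fin]

lemma integrable_gauss_shift {d : ℕ} {a : ℝ} (ha : 0 < a) (z : EuclideanSpace ℝ (Fin d)) :
    Integrable (fun y : EuclideanSpace ℝ (Fin d) => Real.exp (-a * ‖y - z‖ ^ 2)) := by
  have h0 : Integrable (fun y : EuclideanSpace ℝ (Fin d) => Real.exp (-a * ‖y‖ ^ 2)) := by
    have h := (GaussianFourier.integrable_cexp_neg_mul_sq_norm_add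
      (V := EuclideanSpace ℝ (Fin d)) (b := (a : ℂ)) (by simpa using ha) 0 0).re
    refine h.congr (Filter.Eventually.of_forall fun y => ?_)
    simp only [zero_mul, add_zero]
    rw [show -(a:ℂ) * (‖y‖:ℂ) ^ 2 = ((-a * ‖y‖ ^ 2 : ℝ) : ℂ) by push_cast; ring]
    rw [RCLike.re_to_complex, Complex.exp_ofReal_re]
  exact h0.comp_sub_right z

lemma hk_conv {d : ℕ} {t a : ℝ} (ht : 0 < t) (ha : 0 < a) (x : EuclideanSpace ℝ (Fin d)) :
    ∫⁻ y : EuclideanSpace ℝ (Fin d),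
        ENNReal.ofReal (heatKernel d t (x - y)) * ENNReal.ofReal (Real.exp (-a * ‖y‖ ^ 2))
      = ENNReal.ofReal ((1 + 4 * a * t) ^ (-(d : ℝ) / 2)
          * Real.exp (-(a / (1 + 4 * a * t)) * ‖x‖ ^ 2)) := by
  set b : ℝ := 1 / (4 * t) with hb
  have hbpos : 0 < b := by positivity
  have hABpos : 0 < a + b := by positivity
  have hTpos : 0 < 1 + 4 * a * t := by positivity
  have h4πt : (0:ℝ) < 4 * Real.pi * t := by positivity
  set Cst : ℝ := (4 * Real.pi * t) ^ (-(d : ℝ) / 2)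
      * Real.exp (-(a * b / (a + b)) * ‖x‖ ^ 2) with hCst
  have hCstnn : 0 ≤ Cst := by positivity
  have hpt : ∀ y : EuclideanSpace ℝ (Fin d),
      ENNReal.ofReal (heatKernel d t (x - y)) * ENNReal.ofReal (Real.exp (-a * ‖y‖ ^ 2))
        = ENNReal.ofReal (Cst * Real.exp (-(a + b) * ‖y - (b / (a + b)) • x‖ ^ 2)) := by
    intro y
    rw [← ENNReal.ofReal_mul (heatKernel_nonneg ht _)]
    congr 1
    have key := gauss_complete_sq a b hABpos.ne' x y
    have hbb : b * ‖x - y‖ ^ 2 = ‖x - y‖ ^ 2 / (4 * t) := by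
      rw [hb]; ring
    have hsum : -‖x - y‖ ^ 2 / (4 * t) + -a * ‖y‖ ^ 2
        = -(a * b / (a + b)) * ‖x‖ ^ 2 + -(a + b) * ‖y - (b / (a + b)) • x‖ ^ 2 := by
      linear_combination (-1 : ℝ) * key + hbb
    calc heatKernel d t (x - y) * Real.exp (-a * ‖y‖ ^ 2)
        = (4 * Real.pi * t) ^ (-(d : ℝ) / 2)
            * Real.exp (-‖x - y‖ ^ 2 / (4 * t) + -a * ‖y‖ ^ 2) := by
          unfold heatKernel; rw [Real.exp_add]; ring
      _ = Cst * Real.exp (-(a + b) * ‖y - (b / (a + b)) • x‖ ^ 2) := by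
          rw [hsum, Real.exp_add, hCst]; ring
  rw [lintegral_congr hpt]
  have hint : Integrable (fun y : EuclideanSpace ℝ (Fin d) =>
      Cst * Real.exp (-(a + b) * ‖y - (b / (a + b)) • x‖ ^ 2)) :=
    (integrable_gauss_shift hABpos _).const_mul Cst
  rw [← ofReal_integral_eq_lintegral_ofReal hint
    (Filter.Eventually.of_forall fun y => by positivity)]
  rw [integral_const_mul, integral_gauss_shift hABpos]
  congr 1
  have hexp : a * b / (a + b) = a / (1 + 4 * a * t) := by
    rw [hb, div_eq_div_iff (by positivity) (by positivity)]; field_simp; try ring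
  have hdiv : Real.pi / (a + b) = (4 * Real.pi * t) / (1 + 4 * a * t) := by
    rw [hb, div_eq_div_iff (by positivity) (by positivity)]; field_simp; try ring
  rw [hCst, hexp, hdiv, Real.div_rpow h4πt.le hTpos.le]
  simp only [neg_div]
  rw [Real.rpow_neg h4πt.le, Real.rpow_neg hTpos.le]
  have hne : (4 * Real.pi * t) ^ ((d:ℝ)/2) ≠ 0 := by positivity
  field_simp

lemma gbar_pos {d : ℕ} {k s : ℝ} (hk : 0 < k) (hs : 0 ≤ s) (x : EuclideanSpace ℝ (Fin d)) :
    0 < gbar d k s x := by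
  unfold gbar
  have : (0:ℝ) < 1 + 4 * k * s := by positivity
  positivity

lemma linear_le {d : ℕ} {k t δ : ℝ} (hk : 0 < k) (ht : 0 < t) (hδ : 0 ≤ δ)
    {u₀ : EuclideanSpace ℝ (Fin d) → ℝ}
    (hub : ∀ z, u₀ z ≤ δ * Real.exp (-k * ‖z‖ ^ 2)) (x : EuclideanSpace ℝ (Fin d)) :
    ∫⁻ y, ENNReal.ofReal (heatKernel d t (x - y)) * ENNReal.ofReal (u₀ y)
      ≤ ENNReal.ofReal (δ * gbar d k t x) := by
  have h1 : ∫⁻ y, ENNReal.ofReal (heatKernel d t (x - y)) * ENNReal.ofReal (u₀ y)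
      ≤ ∫⁻ y, ENNReal.ofReal δ *
        (ENNReal.ofReal (heatKernel d t (x - y)) * ENNReal.ofReal (Real.exp (-k * ‖y‖ ^ 2))) := by
    refine lintegral_mono fun y => ?_
    rw [mul_left_comm]
    refine mul_le_mul_right ?_ _
    exact (ENNReal.ofReal_le_ofReal (hub y)).trans (le_of_eq (ENNReal.ofReal_mul hδ))
  refine h1.trans ?_
  rw [lintegral_const_mul' _ _ ENNReal.ofReal_ne_top, hk_conv ht hk x,
    ← ENNReal.ofReal_mul hδ]
  rfl

lemma nonlin_le {d : ℕ} {k p s t M : ℝ} (hk : 0 < k) (hp1 : 1 ≤ p) (hM : 0 ≤ M)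
    (hs : 0 < s) (hst : s < t) (x : EuclideanSpace ℝ (Fin d)) :
    ∫⁻ y, ENNReal.ofReal (heatKernel d (t - s) (x - y))
        * (ENNReal.ofReal (M * gbar d k s y)) ^ p
      ≤ ENNReal.ofReal ((M ^ p * gbar d k t x)
          * (1 + 4 * k * s) ^ (-((p - 1) * ((d : ℝ) / 2)))) := by
  have hp0 : (0:ℝ) < p := lt_of_lt_of_le one_pos hp1
  have hq0 : (0:ℝ) ≤ (d : ℝ) / 2 := by positivity
  have hSpos : (0:ℝ) < 1 + 4 * k * s := by positivity
  have hTpos : (0:ℝ) < 1 + 4 * k * t := by nlinarith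
  have hts : 0 < t - s := by linarith
  have hapos : 0 < p * k / (1 + 4 * k * s) := by positivity
  set S : ℝ := 1 + 4 * k * s with hS
  set T : ℝ := 1 + 4 * k * t with hT
  set a : ℝ := p * k / S with ha
  set A : ℝ := 1 + 4 * a * (t - s) with hA
  have hApos : 0 < A := by positivity
  -- pointwise rewrite of the nonlinear power
  have hpt : ∀ y : EuclideanSpace ℝ (Fin d),
      ENNReal.ofReal (heatKernel d (t - s) (x - y)) * (ENNReal.ofReal (M * gbar d k s y)) ^ p
        = ENNReal.ofReal (M ^ p * S ^ (-((d : ℝ) / 2) * p)) *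
            (ENNReal.ofReal (heatKernel d (t - s) (x - y))
              * ENNReal.ofReal (Real.exp (-a * ‖y‖ ^ 2))) := by
    intro y
    have hgpos : 0 < gbar d k s y := gbar_pos hk hs.le y
    rw [mul_left_comm]
    congr 1
    rw [ENNReal.ofReal_rpow_of_nonneg (by positivity) hp0.le,
      ← ENNReal.ofReal_mul (by positivity)]
    congr 1
    unfold gbar
    rw [← hS]
    simp only [neg_div]
    rw [show M * (S ^ (-((d : ℝ) / 2)) * Real.exp (-(k / S) * ‖y‖ ^ 2))
        = M * S ^ (-((d : ℝ) / 2)) * Real.exp (-(k / S) * ‖y‖ ^ 2) from (mul_assoc _ _ _).symm]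
    rw [Real.mul_rpow (by positivity) (Real.exp_nonneg _),
      Real.mul_rpow hM (by positivity), ← Real.rpow_mul hSpos.le, ← Real.exp_mul]
    have he : -(k / S) * ‖y‖ ^ 2 * p = -a * ‖y‖ ^ 2 := by rw [ha]; ring
    rw [he]
  rw [lintegral_congr hpt, lintegral_const_mul' _ _ ENNReal.ofReal_ne_top,
    hk_conv hts hapos x]
  rw [← hA]
  rw [← ENNReal.ofReal_mul (by positivity)]
  apply ENNReal.ofReal_le_ofReal
  -- now a pure real inequality
  simp only [neg_div]
  have hAS : A * S = S + 4 * p * k * (t - s) := by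
    rw [hA, ha]
    field_simp
    try ring
    try tauto
  have hTle : T ≤ A * S := by
    rw [hAS, hT, hS]
    nlinarith [mul_nonneg (mul_nonneg (show (0:ℝ) ≤ p - 1 by linarith) hk.le) hts.le]
  have h2 : A ^ (-((d : ℝ) / 2)) ≤ S ^ ((d : ℝ) / 2) * T ^ (-((d : ℝ) / 2)) := by
    have hTdS : 0 < T / S := by positivity
    have h2a : A ^ (-((d : ℝ) / 2)) ≤ (T / S) ^ (-((d : ℝ) / 2)) :=
      Real.rpow_le_rpow_of_nonpos hTdS ((div_le_iff₀ hSpos).2 hTle) (by linarith)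
    have h2b : (T / S) ^ (-((d : ℝ) / 2)) = S ^ ((d : ℝ) / 2) * T ^ (-((d : ℝ) / 2)) := by
      rw [Real.div_rpow hTpos.le hSpos.le, Real.rpow_neg hTpos.le, Real.rpow_neg hSpos.le,
        inv_div_inv, div_eq_mul_inv]
    rw [h2b] at h2a; exact h2a
  have h3 : Real.exp (-(a / A) * ‖x‖ ^ 2) ≤ Real.exp (-(k / T) * ‖x‖ ^ 2) := by
    apply Real.exp_le_exp.2
    have hdiv : k / T ≤ a / A := by
      rw [div_le_div_iff₀ hTpos hApos]
      have hdiff : a * T - k * A = k * (p - 1) := by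
        rw [hA, ha, hT, hS]
        field_simp
        ring
      nlinarith
    nlinarith [mul_le_mul_of_nonneg_right hdiv (sq_nonneg ‖x‖)]
  have hSS : S ^ (-((d : ℝ) / 2) * p) * S ^ ((d : ℝ) / 2) = S ^ (-((p - 1) * ((d : ℝ) / 2))) := by
    rw [← Real.rpow_add hSpos]; ring_nf
  have hmain : A ^ (-((d : ℝ) / 2)) * Real.exp (-(a / A) * ‖x‖ ^ 2)
      ≤ S ^ ((d : ℝ) / 2) * T ^ (-((d : ℝ) / 2)) * Real.exp (-(k / T) * ‖x‖ ^ 2) :=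
    mul_le_mul h2 h3 (Real.exp_nonneg _) (by positivity)
  calc M ^ p * S ^ (-((d : ℝ) / 2) * p) * (A ^ (-((d : ℝ) / 2)) * Real.exp (-(a / A) * ‖x‖ ^ 2))
      ≤ M ^ p * S ^ (-((d : ℝ) / 2) * p)
          * (S ^ ((d : ℝ) / 2) * T ^ (-((d : ℝ) / 2)) * Real.exp (-(k / T) * ‖x‖ ^ 2)) :=
        mul_le_mul_of_nonneg_left hmain (by positivity)
    _ = M ^ p * gbar d k t x * S ^ (-((p - 1) * ((d : ℝ) / 2))) := by
        unfold gbar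
        rw [← hT]
        simp only [neg_div]
        linear_combination (M ^ p * T ^ (-((d : ℝ) / 2)) * Real.exp (-(k / T) * ‖x‖ ^ 2)) * hSS

lemma time_int {k q : ℝ} (hk : 0 < k) (hq : 1 < q) (t : ℝ) :
    ∫⁻ s in Set.Ioo (0:ℝ) t, ENNReal.ofReal ((1 + 4 * k * s) ^ (-q))
      ≤ ENNReal.ofReal (1 + (4 * k) ^ (-q) / (q - 1)) := by
  have h0 : ∫⁻ s in Set.Ioo (0:ℝ) t, ENNReal.ofReal ((1 + 4 * k * s) ^ (-q))
      ≤ ∫⁻ s in Set.Ioi (0:ℝ), ENNReal.ofReal ((1 + 4 * k * s) ^ (-q)) :=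
    lintegral_mono_set fun s hs => hs.1
  refine h0.trans ?_
  rw [show Set.Ioi (0:ℝ) = Set.Ioc (0:ℝ) 1 ∪ Set.Ioi 1 from
    (Set.Ioc_union_Ioi_eq_Ioi (by norm_num)).symm]
  rw [lintegral_union measurableSet_Ioi (Set.Ioc_disjoint_Ioi le_rfl)]
  have h1 : ∫⁻ s in Set.Ioc (0:ℝ) 1, ENNReal.ofReal ((1 + 4 * k * s) ^ (-q))
      ≤ ENNReal.ofReal 1 := by
    have : ∫⁻ s in Set.Ioc (0:ℝ) 1, ENNReal.ofReal ((1 + 4 * k * s) ^ (-q))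
        ≤ ∫⁻ _ in Set.Ioc (0:ℝ) 1, 1 := by
      refine setLIntegral_mono' measurableSet_Ioc fun s hs => ?_
      have hb : (1:ℝ) ≤ 1 + 4 * k * s := by nlinarith [hs.1]
      calc ENNReal.ofReal ((1 + 4 * k * s) ^ (-q))
          ≤ ENNReal.ofReal 1 :=
            ENNReal.ofReal_le_ofReal
              (Real.rpow_le_one_of_one_le_of_nonpos hb (by linarith))
        _ = 1 := ENNReal.ofReal_one
    refine this.trans ?_
    rw [setLIntegral_one, Real.volume_Ioc, ENNReal.ofReal_one]
    simp
  have h2 : ∫⁻ s in Set.Ioi (1:ℝ), ENNReal.ofReal ((1 + 4 * k * s) ^ (-q))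
      ≤ ENNReal.ofReal ((4 * k) ^ (-q) / (q - 1)) := by
    have hmono : ∫⁻ s in Set.Ioi (1:ℝ), ENNReal.ofReal ((1 + 4 * k * s) ^ (-q))
        ≤ ∫⁻ s in Set.Ioi (1:ℝ), ENNReal.ofReal ((4 * k) ^ (-q) * s ^ (-q)) := by
      refine setLIntegral_mono' measurableSet_Ioi fun s hs => ?_
      have hs1 : (1:ℝ) < s := hs
      have hks : (0:ℝ) < 4 * k * s := by positivity
      refine ENNReal.ofReal_le_ofReal ?_
      rw [← Real.mul_rpow (by positivity) (by positivity)]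
      exact Real.rpow_le_rpow_of_nonpos hks (by nlinarith) (by linarith)
    refine hmono.trans ?_
    have hint : IntegrableOn (fun s : ℝ => (4 * k) ^ (-q) * s ^ (-q)) (Set.Ioi 1) :=
      (integrableOn_Ioi_rpow_of_lt (by linarith) one_pos).const_mul _
    rw [← ofReal_integral_eq_lintegral_ofReal hint
      ((ae_restrict_iff' measurableSet_Ioi).2 (Filter.Eventually.of_forall fun s hs => by
        have : (0:ℝ) < s := lt_trans one_pos hs
        positivity))]
    rw [MeasureTheory.integral_const_mul, integral_Ioi_rpow_of_lt (by linarith) one_pos]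
    apply ENNReal.ofReal_le_ofReal
    rw [Real.one_rpow]
    rw [show -(1:ℝ) / (-q + 1) = 1 / (q - 1) by
      have hne : (-q + 1 : ℝ) ≠ 0 := ne_of_lt (by linarith)
      have hne2 : (q - 1 : ℝ) ≠ 0 := ne_of_gt (by linarith)
      field_simp
      ring]
    rw [div_eq_mul_inv, div_eq_mul_inv, one_mul]
  calc _ ≤ ENNReal.ofReal 1 + ENNReal.ofReal ((4 * k) ^ (-q) / (q - 1)) := add_le_add h1 h2
    _ = ENNReal.ofReal (1 + (4 * k) ^ (-q) / (q - 1)) := by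
        rw [← ENNReal.ofReal_add (by norm_num)
          (div_nonneg (Real.rpow_nonneg (by positivity) _) (by linarith))]

noncomputable def Phi (d : ℕ) (p : ℝ) (u₀ : EuclideanSpace ℝ (Fin d) → ℝ)
    (v : ℝ → EuclideanSpace ℝ (Fin d) → ℝ≥0∞) (t : ℝ) (x : EuclideanSpace ℝ (Fin d)) :
    ℝ≥0∞ :=
  if 0 < t then
    (∫⁻ y, ENNReal.ofReal (heatKernel d t (x - y)) * ENNReal.ofReal (u₀ y)) +
      ∫⁻ s in Set.Ioo 0 t,
        ∫⁻ y, ENNReal.ofReal (heatKernel d (t - s) (x - y)) * (v s y) ^ p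
  else 0

lemma Phi_mono {d : ℕ} {p : ℝ} (hp : 0 ≤ p) (u₀ : EuclideanSpace ℝ (Fin d) → ℝ)
    {v w : ℝ → EuclideanSpace ℝ (Fin d) → ℝ≥0∞} (h : ∀ t x, v t x ≤ w t x) :
    ∀ t x, Phi d p u₀ v t x ≤ Phi d p u₀ w t x := by
  intro t x
  unfold Phi
  split
  · refine add_le_add le_rfl (lintegral_mono fun s => lintegral_mono fun y => ?_)
    exact mul_le_mul_right (ENNReal.rpow_le_rpow (h s y) hp) _
  · exact le_rfl

lemma Phi_measurable {d : ℕ} {p : ℝ} {u₀ : EuclideanSpace ℝ (Fin d) → ℝ}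
    (hu₀ : Measurable u₀) {v : ℝ → EuclideanSpace ℝ (Fin d) → ℝ≥0∞}
    (hv : Measurable (Function.uncurry v)) :
    Measurable (Function.uncurry (Phi d p u₀ v)) := by
  have hK : Measurable fun q : ℝ × EuclideanSpace ℝ (Fin d) =>
      ENNReal.ofReal (heatKernel d q.1 q.2) := (measurable_heatKernel d).ennreal_ofReal
  have hL : Measurable fun q : ℝ × EuclideanSpace ℝ (Fin d) =>
      ∫⁻ y, ENNReal.ofReal (heatKernel d q.1 (q.2 - y)) * ENNReal.ofReal (u₀ y) := by
    apply Measurable.lintegral_prod_right'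
      (f := fun r : (ℝ × EuclideanSpace ℝ (Fin d)) × EuclideanSpace ℝ (Fin d) =>
        ENNReal.ofReal (heatKernel d r.1.1 (r.1.2 - r.2)) * ENNReal.ofReal (u₀ r.2))
    exact (hK.comp ((measurable_fst.comp measurable_fst).prodMk
      ((measurable_snd.comp measurable_fst).sub measurable_snd))).mul
      ((hu₀.comp measurable_snd).ennreal_ofReal)
  have hNinner : Measurable fun r : (ℝ × EuclideanSpace ℝ (Fin d)) × ℝ =>
      ∫⁻ y, ENNReal.ofReal (heatKernel d (r.1.1 - r.2) (r.1.2 - y)) * (v r.2 y) ^ p := by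
    apply Measurable.lintegral_prod_right'
      (f := fun r : ((ℝ × EuclideanSpace ℝ (Fin d)) × ℝ) × EuclideanSpace ℝ (Fin d) =>
        ENNReal.ofReal (heatKernel d (r.1.1.1 - r.1.2) (r.1.1.2 - r.2)) * (v r.1.2 r.2) ^ p)
    refine Measurable.mul ?_ ?_
    · exact hK.comp ((((measurable_fst.comp measurable_fst).comp measurable_fst).sub
        (measurable_snd.comp measurable_fst)).prodMk
        (((measurable_snd.comp measurable_fst).comp measurable_fst).sub measurable_snd))
    · exact (hv.comp (((measurable_snd.comp measurable_fst)).prodMk measurable_snd)).pow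
        measurable_const
  have hN : Measurable fun q : ℝ × EuclideanSpace ℝ (Fin d) =>
      ∫⁻ s in Set.Ioo 0 q.1,
        ∫⁻ y, ENNReal.ofReal (heatKernel d (q.1 - s) (q.2 - y)) * (v s y) ^ p := by
    have hrw : (fun q : ℝ × EuclideanSpace ℝ (Fin d) =>
        ∫⁻ s in Set.Ioo 0 q.1,
          ∫⁻ y, ENNReal.ofReal (heatKernel d (q.1 - s) (q.2 - y)) * (v s y) ^ p)
        = fun q => ∫⁻ s, Set.indicator {r : (ℝ × EuclideanSpace ℝ (Fin d)) × ℝ |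
            0 < r.2 ∧ r.2 < r.1.1}
          (fun r => ∫⁻ y, ENNReal.ofReal (heatKernel d (r.1.1 - r.2) (r.1.2 - y))
            * (v r.2 y) ^ p) (q, s) := by
      funext q
      rw [← lintegral_indicator measurableSet_Ioo]
      congr 1
    rw [hrw]
    apply Measurable.lintegral_prod_right'
    exact hNinner.indicator ((measurableSet_lt measurable_const measurable_snd).inter
      (measurableSet_lt measurable_snd (measurable_fst.comp measurable_fst)))
  have heq : Function.uncurry (Phi d p u₀ v) = fun q : ℝ × EuclideanSpace ℝ (Fin d) =>
      Set.indicator {q : ℝ × EuclideanSpace ℝ (Fin d) | 0 < q.1}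
        (fun q => (∫⁻ y, ENNReal.ofReal (heatKernel d q.1 (q.2 - y)) * ENNReal.ofReal (u₀ y)) +
          ∫⁻ s in Set.Ioo 0 q.1,
            ∫⁻ y, ENNReal.ofReal (heatKernel d (q.1 - s) (q.2 - y)) * (v s y) ^ p) q := by
    funext q
    rw [Function.uncurry]
    show Phi d p u₀ v q.1 q.2 = _
    unfold Phi
    by_cases hq : 0 < q.1
    · rw [if_pos hq, Set.indicator_of_mem (by exact hq)]
    · rw [if_neg hq, Set.indicator_of_notMem (by exact hq)]
  rw [heq]
  exact (hL.add hN).indicator (measurableSet_lt measurable_const measurable_fst)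

lemma rpow_iSup_seq {p : ℝ} (hp : 0 < p) (c : ℕ → ℝ≥0∞) :
    (⨆ n, c n) ^ p = ⨆ n, (c n) ^ p := by
  refine Monotone.map_iSup_of_continuousAt (f := fun x : ℝ≥0∞ => x ^ p) (g := c) ?_ ?_ ?_
  · exact ENNReal.continuous_rpow_const.continuousAt
  · exact fun u w huw => ENNReal.rpow_le_rpow huw hp.le
  · simpa using ENNReal.zero_rpow_of_pos hp

lemma Phi_iSup {d : ℕ} {p : ℝ} (hp : 0 < p) (u₀ : EuclideanSpace ℝ (Fin d) → ℝ)
    {v : ℕ → ℝ → EuclideanSpace ℝ (Fin d) → ℝ≥0∞}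
    (hm : ∀ n, Measurable (Function.uncurry (v n)))
    (hmono : ∀ n m, n ≤ m → ∀ t x, v n t x ≤ v m t x) (t : ℝ)
    (x : EuclideanSpace ℝ (Fin d)) :
    Phi d p u₀ (fun t x => ⨆ n, v n t x) t x = ⨆ n, Phi d p u₀ (v n) t x := by
  unfold Phi
  by_cases ht : 0 < t
  · simp only [if_pos ht]
    have hvm : ∀ n (s : ℝ), Measurable fun y => (v n s y) ^ p := fun n s =>
      ((hm n).comp (measurable_prodMk_left)).pow measurable_const
    have h1 : ∀ s : ℝ, (∫⁻ y, ENNReal.ofReal (heatKernel d (t - s) (x - y))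
          * ((⨆ n, v n s y) ^ p))
        = ⨆ n, ∫⁻ y, ENNReal.ofReal (heatKernel d (t - s) (x - y)) * (v n s y) ^ p := by
      intro s
      have : (fun y => ENNReal.ofReal (heatKernel d (t - s) (x - y)) * ((⨆ n, v n s y) ^ p))
          = fun y => ⨆ n, ENNReal.ofReal (heatKernel d (t - s) (x - y)) * (v n s y) ^ p := by
        funext y
        rw [rpow_iSup_seq hp, ENNReal.mul_iSup]
      rw [this]
      rw [lintegral_iSup]
      · intro n
        exact (((measurable_heatKernel d).comp
          (measurable_const.prodMk (measurable_const.sub measurable_id))).ennreal_ofReal).mul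
          (hvm n s)
      · intro n m hnm
        exact fun y => mul_le_mul_right (ENNReal.rpow_le_rpow (hmono n m hnm s y) hp.le) _
    have h2 : (∫⁻ s in Set.Ioo 0 t, ∫⁻ y, ENNReal.ofReal (heatKernel d (t - s) (x - y))
          * ((⨆ n, v n s y) ^ p))
        = ⨆ n, ∫⁻ s in Set.Ioo 0 t,
            ∫⁻ y, ENNReal.ofReal (heatKernel d (t - s) (x - y)) * (v n s y) ^ p := by
      rw [lintegral_congr h1]
      rw [lintegral_iSup]
      · intro n
        apply Measurable.lintegral_prod_right'
          (f := fun r : ℝ × EuclideanSpace ℝ (Fin d) =>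
            ENNReal.ofReal (heatKernel d (t - r.1) (x - r.2)) * (v n r.1 r.2) ^ p)
        exact (((measurable_heatKernel d).comp
          ((measurable_const.sub measurable_fst).prodMk
            (measurable_const.sub measurable_snd))).ennreal_ofReal).mul
          ((hm n).pow measurable_const)
      · intro n m hnm
        exact fun s => lintegral_mono fun y =>
          mul_le_mul_right (ENNReal.rpow_le_rpow (hmono n m hnm s y) hp.le) _
    rw [h2, ENNReal.add_iSup]
  · simp only [if_neg ht]
    simp

end FujitaAux

open Real in
theorem fujita_supercritical_global_existence (d : ℕ) (hd : 1 ≤ d)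
    (p : ℝ) (hp : 1 + 2 / d < p) :
    ∀ k > (0 : ℝ), ∃ δ > (0 : ℝ),
      ∀ u₀ : EuclideanSpace ℝ (Fin d) → ℝ, Continuous u₀ → (∀ x, 0 ≤ u₀ x) →
        (∀ x, u₀ x ≤ δ * Real.exp (-k * ‖x‖ ^ 2)) →
        ∃ u : ℝ → EuclideanSpace ℝ (Fin d) → ℝ≥0∞,
          Measurable (Function.uncurry u) ∧
          (∀ t, 0 < t → ∀ x, u t x < ⊤) ∧
          (∀ t : ℝ, 0 < t → ∀ x,
            u t x = (∫⁻ y, ENNReal.ofReal (heatKernel d t (x - y)) * ENNReal.ofReal (u₀ y)) +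
              ∫⁻ s in Set.Ioo 0 t,
                ∫⁻ y, ENNReal.ofReal (heatKernel d (t - s) (x - y)) * (u s y) ^ p) := by
  intro k hk
  have hd0 : (0:ℝ) < (d:ℝ) := by exact_mod_cast Nat.lt_of_lt_of_le Nat.zero_lt_one hd
  have h2d : (0:ℝ) < 2 / (d:ℝ) := by positivity
  have hp1 : (1:ℝ) < p := by linarith
  have hp0 : (0:ℝ) < p := by linarith
  have hq'1 : (1:ℝ) < (p - 1) * ((d:ℝ) / 2) := by
    have h1 : (2 / (d:ℝ)) * ((d:ℝ) / 2) = 1 := by field_simp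
    nlinarith [mul_lt_mul_of_pos_right (show 2 / (d:ℝ) < p - 1 by linarith)
      (show (0:ℝ) < (d:ℝ) / 2 by positivity)]
  set C : ℝ := 1 + (4 * k) ^ (-((p - 1) * ((d:ℝ) / 2))) / ((p - 1) * ((d:ℝ) / 2) - 1) with hC
  have hC0 : (0:ℝ) < C := by
    have h1 : (0:ℝ) ≤ (4 * k) ^ (-((p - 1) * ((d:ℝ) / 2))) / ((p - 1) * ((d:ℝ) / 2) - 1) :=
      div_nonneg (Real.rpow_nonneg (by positivity) _) (by linarith)
    rw [hC]; linarith
  have h2pC : (0:ℝ) < 2 ^ p * C := by positivity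
  set δ : ℝ := ((2 ^ p * C)⁻¹) ^ (1 / (p - 1)) with hδdef
  have hδ : 0 < δ := Real.rpow_pos_of_pos (inv_pos.2 h2pC) _
  have hδp : δ ^ (p - 1) = (2 ^ p * C)⁻¹ := by
    rw [hδdef, ← Real.rpow_mul (inv_pos.2 h2pC).le,
      one_div_mul_cancel (sub_ne_zero.2 hp1.ne'), Real.rpow_one]
  have hkey : (2 * δ) ^ p * C = δ := by
    rw [Real.mul_rpow (by norm_num) hδ.le]
    have hδsplit : δ ^ p = δ ^ (p - 1) * δ := by
      have h1 : δ ^ ((p - 1) + 1) = δ ^ (p - 1) * δ := by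
        rw [Real.rpow_add hδ, Real.rpow_one]
      rw [sub_add_cancel] at h1
      exact h1
    rw [hδsplit, hδp]
    field_simp
  refine ⟨δ, hδ, ?_⟩
  intro u₀ hu₀c hu₀nn hu₀b
  have hitmeas : ∀ n, Measurable (Function.uncurry
      ((Phi d p u₀)^[n] (fun _ _ => (0:ℝ≥0∞)))) := by
    intro n
    induction n with
    | zero =>
      simp only [Function.iterate_zero, id_eq]
      exact measurable_const
    | succ n ih =>
      rw [Function.iterate_succ_apply']
      exact Phi_measurable hu₀c.measurable ih
  have hstep : ∀ n t x, (Phi d p u₀)^[n] (fun _ _ => (0:ℝ≥0∞)) t x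
      ≤ (Phi d p u₀)^[n + 1] (fun _ _ => (0:ℝ≥0∞)) t x := by
    intro n
    induction n with
    | zero =>
      intro t x
      simp only [Function.iterate_zero, id_eq]
      exact zero_le
    | succ n ih =>
      rw [Function.iterate_succ_apply', Function.iterate_succ_apply']
      exact Phi_mono hp0.le u₀ ih
  have hmono : ∀ n m, n ≤ m → ∀ t x, (Phi d p u₀)^[n] (fun _ _ => (0:ℝ≥0∞)) t x
      ≤ (Phi d p u₀)^[m] (fun _ _ => (0:ℝ≥0∞)) t x := by
    intro n m hnm t x
    exact monotone_nat_of_le_succ (fun n => hstep n t x) hnm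
  have hbound : ∀ n t, 0 < t → ∀ x, (Phi d p u₀)^[n] (fun _ _ => (0:ℝ≥0∞)) t x
      ≤ ENNReal.ofReal (2 * δ * gbar d k t x) := by
    intro n
    induction n with
    | zero =>
      intro t ht x
      simp only [Function.iterate_zero, id_eq]
      exact zero_le
    | succ n ih =>
      intro t ht x
      rw [Function.iterate_succ_apply']
      have hgnn : (0:ℝ) ≤ gbar d k t x := (gbar_pos hk ht.le x).le
      have hlin := linear_le hk ht hδ.le hu₀b x
      have hnl : (∫⁻ s in Set.Ioo 0 t, ∫⁻ y,
            ENNReal.ofReal (heatKernel d (t - s) (x - y))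
              * ((Phi d p u₀)^[n] (fun _ _ => (0:ℝ≥0∞)) s y) ^ p)
          ≤ ENNReal.ofReal (δ * gbar d k t x) := by
        have hconstnn : (0:ℝ) ≤ (2 * δ) ^ p * gbar d k t x :=
          mul_nonneg (Real.rpow_nonneg (by positivity) _) hgnn
        calc (∫⁻ s in Set.Ioo 0 t, ∫⁻ y,
              ENNReal.ofReal (heatKernel d (t - s) (x - y))
                * ((Phi d p u₀)^[n] (fun _ _ => (0:ℝ≥0∞)) s y) ^ p)
            ≤ ∫⁻ s in Set.Ioo 0 t, ENNReal.ofReal (((2 * δ) ^ p * gbar d k t x)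
                * (1 + 4 * k * s) ^ (-((p - 1) * ((d:ℝ) / 2)))) := by
              refine setLIntegral_mono' measurableSet_Ioo fun s hs => ?_
              refine le_trans (lintegral_mono fun y => mul_le_mul_right
                (ENNReal.rpow_le_rpow (ih s hs.1 y) hp0.le) _) ?_
              exact nonlin_le hk hp1.le (by positivity) hs.1 hs.2 x
          _ = ENNReal.ofReal ((2 * δ) ^ p * gbar d k t x)
                * ∫⁻ s in Set.Ioo 0 t,
                    ENNReal.ofReal ((1 + 4 * k * s) ^ (-((p - 1) * ((d:ℝ) / 2)))) := by
              simp_rw [ENNReal.ofReal_mul hconstnn]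
              rw [lintegral_const_mul' _ _ ENNReal.ofReal_ne_top]
          _ ≤ ENNReal.ofReal ((2 * δ) ^ p * gbar d k t x) * ENNReal.ofReal C :=
              mul_le_mul_right (time_int hk hq'1 t) _
          _ = ENNReal.ofReal (δ * gbar d k t x) := by
              rw [← ENNReal.ofReal_mul hconstnn]
              congr 1
              linear_combination gbar d k t x * hkey
      show Phi d p u₀ ((Phi d p u₀)^[n] (fun _ _ => (0:ℝ≥0∞))) t x ≤ _
      unfold Phi
      rw [if_pos ht]
      calc _ ≤ ENNReal.ofReal (δ * gbar d k t x) + ENNReal.ofReal (δ * gbar d k t x) :=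
            add_le_add hlin hnl
        _ = ENNReal.ofReal (2 * δ * gbar d k t x) := by
            rw [← ENNReal.ofReal_add (by positivity) (by positivity)]
            ring_nf
  refine ⟨fun t x => ⨆ n, (Phi d p u₀)^[n] (fun _ _ => (0:ℝ≥0∞)) t x, ?_, ?_, ?_⟩
  · exact Measurable.iSup fun n => hitmeas n
  · intro t ht x
    exact lt_of_le_of_lt (iSup_le fun n => hbound n t ht x) ENNReal.ofReal_lt_top
  · intro t ht x
    have hfix : (⨆ n, (Phi d p u₀)^[n] (fun _ _ => (0:ℝ≥0∞)) t x)
        = Phi d p u₀ (fun t x => ⨆ n, (Phi d p u₀)^[n] (fun _ _ => (0:ℝ≥0∞)) t x) t x := by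
      rw [Phi_iSup hp0 u₀ hitmeas hmono t x]
      apply le_antisymm
      · refine iSup_le fun n => ?_
        refine le_trans (hstep n t x) ?_
        rw [Function.iterate_succ_apply']
        exact le_iSup (fun m => Phi d p u₀ ((Phi d p u₀)^[m] (fun _ _ => (0:ℝ≥0∞))) t x) n
      · refine iSup_le fun n => ?_
        have e : Phi d p u₀ ((Phi d p u₀)^[n] (fun _ _ => (0:ℝ≥0∞)))
            = (Phi d p u₀)^[n + 1] (fun _ _ => (0:ℝ≥0∞)) :=
          (Function.iterate_succ_apply' _ _ _).symm
        rw [e]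
        exact le_iSup (fun m => (Phi d p u₀)^[m] (fun _ _ => (0:ℝ≥0∞)) t x) (n + 1)
    show (⨆ n, (Phi d p u₀)^[n] (fun _ _ => (0:ℝ≥0∞)) t x) = _
    rw [hfix]
    unfold Phi
    rw [if_pos ht]
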